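/- arXiv:0906.3358 — 3 statements merged into one kernel-verified Lean document; each statement's English description precedes it below -/
import Mathlib

section
/- The system of equations p_k(u_1^2,...,u_{N+l}^2) = p_k(\mu_1^2,...,\mu_N^2) for all k = 1,...,N+M-1, where 0 ≤ l ≤ M-1 and p_k denotes the k-th power sum, admits only trivial solutions: there is a subset of N of the variables u_j^2 equal (in some order) to \mu_1^2,...,\mu_N^2, and the remaining l variables u_k^2 are zero. -/
/-!
By Newton's identities, in characteristic zero the power sums `p_1, …, p_n` of `n` numbers
determine their elementary symmetric functions, hence their characteristic polynomial, hence the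
numbers themselves up to order. Padding `μ_1^2, …, μ_N^2` with `l` zeros gives `N + l` numbers
with the same power sums as the `u_i^2`, and `N + l ≤ N + M - 1` of these equations are given.
-/

open Finset Polynomial

section PowerSums

variable {K ι κ : Type*} [CommRing K] [Fintype ι] [Fintype κ]

theorem Multiset.eq_of_card_eq_of_esymm_eq [IsDomain K] {s t : Multiset K}
    (hcard : Multiset.card s = Multiset.card t)
    (h : ∀ k ≤ Multiset.card s, s.esymm k = t.esymm k) : s = t := by
  have hprod : (s.map fun a => X - C a).prod = (t.map fun a => X - C a).prod := by
    rw [Multiset.prod_X_sub_X_eq_sum_esymm, Multiset.prod_X_sub_X_eq_sum_esymm, ← hcard]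
    exact sum_congr rfl fun k hk => by rw [h k (Nat.lt_succ_iff.mp (mem_range.mp hk))]
  simpa only [roots_multiset_prod_X_sub_C] using congrArg roots hprod

theorem mul_esymm_map_univ_eq_sum (f : ι → K) (k : ℕ) :
    k * (univ.val.map f).esymm k = (-1) ^ (k + 1) *
      ∑ a ∈ antidiagonal k with a.1 < k,
        (-1) ^ a.1 * (univ.val.map f).esymm a.1 * ∑ i, f i ^ a.2 := by
  simpa only [map_mul, map_sum, map_pow, map_neg, map_one, map_natCast, MvPolynomial.psum,
    MvPolynomial.aeval_X, MvPolynomial.aeval_esymm_eq_multiset_esymm] using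
    congrArg (MvPolynomial.aeval f) (MvPolynomial.mul_esymm_eq_sum ι K k)

theorem esymm_map_univ_eq_of_sum_pow_eq [IsDomain K] [CharZero K] (f : ι → K) (g : κ → K)
    {n : ℕ} (h : ∀ k, 1 ≤ k → k ≤ n → ∑ i, f i ^ k = ∑ i, g i ^ k) :
    ∀ k ≤ n, (univ.val.map f).esymm k = (univ.val.map g).esymm k := by
  intro k
  induction k using Nat.strong_induction_on with
  | _ k ih =>
    intro hk
    rcases Nat.eq_zero_or_pos k with rfl | hk0
    · simp [Multiset.esymm]
    refine mul_left_cancel₀ (Nat.cast_ne_zero.mpr hk0.ne' : (k : K) ≠ 0) ?_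
    rw [mul_esymm_map_univ_eq_sum f, mul_esymm_map_univ_eq_sum g]
    congr 1
    refine sum_congr rfl fun a ha => ?_
    obtain ⟨hak, hlt⟩ : a.1 + a.2 = k ∧ a.1 < k := by simpa using ha
    rw [ih a.1 hlt (by omega), h a.2 (by omega) (by omega)]

theorem map_univ_eq_of_sum_pow_eq [IsDomain K] [CharZero K] (f : ι → K) (g : κ → K)
    (hcard : Fintype.card ι = Fintype.card κ)
    (h : ∀ k, 1 ≤ k → k ≤ Fintype.card ι → ∑ i, f i ^ k = ∑ i, g i ^ k) :
    univ.val.map f = univ.val.map g :=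
  Multiset.eq_of_card_eq_of_esymm_eq (by simpa using hcard) fun k hk =>
    esymm_map_univ_eq_of_sum_pow_eq f g h k (by simpa using hk)

end PowerSums

theorem exists_equiv_of_map_univ_eq {α ι κ : Type*} [Fintype ι] [Fintype κ]
    (f : ι → α) (g : κ → α) (h : univ.val.map f = univ.val.map g) :
    ∃ e : ι ≃ κ, ∀ i, g (e i) = f i := by
  classical
  have hfiber (c : α) : Fintype.card {i // f i = c} = Fintype.card {j // g j = c} := by
    simpa [Fintype.card_subtype, Finset.card_def, Multiset.count_map, eq_comm] using
      congrArg (Multiset.count c) h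
  exact ⟨Equiv.ofFiberEquiv fun c => Fintype.equivOfCardEq (hfiber c),
    Equiv.ofFiberEquiv_map _⟩

/-- The system of power-sum equations
`p_k(u_1^2, …, u_{N+l}^2) = p_k(μ_1^2, …, μ_N^2)` for `k = 1, …, N+M-1`,
with `0 ≤ l ≤ M-1`, admits only trivial solutions: there is an injection
`σ : Fin N → Fin (N+l)` with `u_{σ j}^2 = μ_j^2` and all remaining `u_i^2 = 0`. -/
theorem power_sum_system_trivial_solution
    (N M l : ℕ) (hM : 1 ≤ M) (hl : l ≤ M - 1)
    (u : Fin (N + l) → ℂ) (μ : Fin N → ℂ)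
    (h : ∀ k : ℕ, 1 ≤ k → k ≤ N + M - 1 →
      ∑ j, (u j ^ 2) ^ k = ∑ j, (μ j ^ 2) ^ k) :
    ∃ σ : Fin N → Fin (N + l), Function.Injective σ ∧
      (∀ j, u (σ j) ^ 2 = μ j ^ 2) ∧
      (∀ i, i ∉ Set.range σ → u i ^ 2 = 0) := by
  let w : Fin N ⊕ Fin l → ℂ := Sum.elim (fun j => μ j ^ 2) 0
  have hw (k : ℕ) (hk : 1 ≤ k) : ∑ x, w x ^ k = ∑ j, (μ j ^ 2) ^ k := by
    simp [w, Fintype.sum_sum_type, zero_pow (by omega : k ≠ 0)]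
  have hmap : univ.val.map (fun i => u i ^ 2) = univ.val.map w :=
    map_univ_eq_of_sum_pow_eq _ w (by simp) fun k hk1 hk2 =>
      (h k hk1 (by rw [Fintype.card_fin] at hk2; omega)).trans (hw k hk1).symm
  obtain ⟨e, he⟩ := exists_equiv_of_map_univ_eq _ w hmap
  refine ⟨e.symm ∘ Sum.inl, e.symm.injective.comp Sum.inl_injective,
    fun j => by simpa [w] using (he (e.symm (.inl j))).symm, fun i hi => ?_⟩
  rcases hei : e i with j | j
  · exact absurd ⟨j, by simp [← hei]⟩ hi
  · simpa [w, hei] using (he i).symm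
end

section
/- If \tau(s,x,y) = det[a_{ij}(x,y)]_{m ≤ i,j ≤ s-1} where a(x,y) = exp(\sum_k x_k \Lambda^k) · A · exp(-\sum_k y_k (\Lambda^T)^k) for a constant matrix A, then \tau(s, x - \epsilon(\lambda), y) = det[(1 - \lambda \Lambda) a(x,y)]_{m ≤ i,j ≤ s-1}, where \epsilon(\lambda) = (\lambda, \lambda^2/2, \lambda^3/3, ...) and \Lambda is the upper shift matrix. -/
open Finset

/-- The upper shift matrix `Λ` with `Λ_{k,k+1} = 1`. -/
def shiftU (d : ℕ) : Matrix (Fin d) (Fin d) ℂ :=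
  Matrix.of fun i j => if (i : ℕ) + 1 = (j : ℕ) then 1 else 0

/-- `a(x,y) = exp(∑_k x_k Λ^k) · A · exp(-∑_k y_k (Λᵀ)^k)`, the time-evolved matrix of
the initial value problem (the times are `x_1, …, x_{d-1}`, `y_1, …, y_{d-1}`). -/
noncomputable def amat (d : ℕ) (A : Matrix (Fin d) (Fin d) ℂ) (x y : ℕ → ℂ) :
    Matrix (Fin d) (Fin d) ℂ :=
  NormedSpace.exp (∑ k ∈ Finset.Icc 1 (d - 1), x k • (shiftU d) ^ k) * A *
    NormedSpace.exp (-∑ k ∈ Finset.Icc 1 (d - 1), y k • ((shiftU d).transpose) ^ k)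

/-!
Because `Λ` is nilpotent, `exp (-∑_{0<k<d} (λ^k/k) Λ^k) = 1 - λΛ`: the `t`-derivative of
`exp (∑ (t^k/k) Λ^k) * (1 - tΛ)` vanishes, since `(∑ t^(k-1) Λ^k) (1 - tΛ)` telescopes to `Λ`.
All exponents involved are polynomials in `Λ`, hence commute, so the Miwa shift multiplies the
left factor `exp (∑ x_k Λ^k)` of `a(x,y)` by `1 - λΛ`; the identity already holds for the whole
matrix, before taking any minor.
-/

section Algebra
variable {R A : Type*} [CommRing R] [Ring A] [Algebra R A]

theorem commute_sum_smul_pow (N : A) (a b : ℕ → R) (s u : Finset ℕ) :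
    Commute (∑ k ∈ s, a k • N ^ k) (∑ k ∈ u, b k • N ^ k) :=
  .sum_left _ _ _ fun k _ => .sum_right _ _ _ fun j _ =>
    (((Commute.refl N).pow_pow k j).smul_left _).smul_right _

theorem sum_Icc_pow_pred_smul_mul_one_sub (N : A) (t : R) (n : ℕ) :
    (∑ k ∈ Icc 1 n, t ^ (k - 1) • N ^ k) * (1 - t • N) = N - t ^ n • N ^ (n + 1) := by
  induction n with
  | zero => simp
  | succ n ih =>
    rw [sum_Icc_succ_top (by omega), add_mul, ih, Nat.add_sub_cancel, mul_sub, mul_one,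
      smul_mul_smul_comm, ← pow_succ, ← pow_succ]
    abel

end Algebra

theorem hasDerivAt_sum_pow_div_smul {𝕂 𝔸 : Type*} [RCLike 𝕂] [NormedRing 𝔸] [NormedAlgebra 𝕂 𝔸]
    (N : 𝔸) (n : ℕ) (t : 𝕂) :
    HasDerivAt (fun t : 𝕂 => ∑ k ∈ Icc 1 n, (t ^ k / k) • N ^ k)
      (∑ k ∈ Icc 1 n, t ^ (k - 1) • N ^ k) t := by
  refine HasDerivAt.fun_sum fun k hk => ?_
  have hk : (k : 𝕂) ≠ 0 := Nat.cast_ne_zero.mpr (by grind)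
  convert ((hasDerivAt_pow k t).div_const (k : 𝕂)).smul_const (N ^ k) using 2
  field_simp

section Banach
variable {𝕂 𝔸 : Type*} [RCLike 𝕂] [NormedRing 𝔸] [NormedAlgebra 𝕂 𝔸] [CompleteSpace 𝔸]

theorem hasDerivAt_exp_of_commute {g : 𝕂 → 𝔸} {g' : 𝔸} {t : 𝕂} (hg : HasDerivAt g g' t)
    (hc : ∀ s, Commute (g s) (g t)) :
    HasDerivAt (fun s => NormedSpace.exp (g s)) (g' * NormedSpace.exp (g t)) t := by
  let : NormedAlgebra ℚ 𝔸 := NormedAlgebra.restrictScalars ℚ 𝕂 𝔸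
  have hsplit : (fun s => NormedSpace.exp (g s)) =
      fun s => NormedSpace.exp (g s - g t) * NormedSpace.exp (g t) := by
    ext s
    rw [← NormedSpace.exp_add_of_commute ((hc s).sub_left (.refl _)), sub_add_cancel]
  have hexp : HasFDerivAt NormedSpace.exp (1 : 𝔸 →L[𝕂] 𝔸) (g t - g t) := by
    rw [sub_self]; exact hasFDerivAt_exp_zero
  rw [hsplit]
  exact (hexp.comp_hasDerivAt t (hg.sub_const (g t))).mul_const _

theorem exp_neg_sum_pow_div_smul_of_pow_eq_zero {N : 𝔸} {n : ℕ} (hN : N ^ (n + 1) = 0) (t : 𝕂) :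
    NormedSpace.exp (-∑ k ∈ Icc 1 n, (t ^ k / k) • N ^ k) = 1 - t • N := by
  let : NormedAlgebra ℚ 𝔸 := NormedAlgebra.restrictScalars ℚ 𝕂 𝔸
  set S : 𝕂 → 𝔸 := fun t => ∑ k ∈ Icc 1 n, (t ^ k / k) • N ^ k
  have hderiv (t : 𝕂) : HasDerivAt (fun t => NormedSpace.exp (S t) * (1 - t • N)) 0 t := by
    refine ((hasDerivAt_exp_of_commute (hasDerivAt_sum_pow_div_smul N n t)
      fun s => commute_sum_smul_pow N _ _ _ _).fun_mul
      (((hasDerivAt_id t).smul_const N).const_sub 1)).congr_deriv ?_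
    rw [((commute_sum_smul_pow N _ _ _ _).exp_right).eq, mul_assoc, id_eq,
      sum_Icc_pow_pred_smul_mul_one_sub, hN, smul_zero, sub_zero, one_smul, mul_neg,
      add_neg_cancel]
  have hS0 : S 0 = 0 := sum_eq_zero fun k hk => by
    rw [zero_pow (by grind), zero_div, zero_smul]
  have hconst : NormedSpace.exp (S t) * (1 - t • N) = 1 := by
    simpa [hS0] using is_const_of_deriv_eq_zero (fun t => (hderiv t).differentiableAt)
      (fun t => (hderiv t).deriv) t 0
  calc NormedSpace.exp (-S t)
      = NormedSpace.exp (-S t) * NormedSpace.exp (S t) * (1 - t • N) := by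
        rw [mul_assoc, hconst, mul_one]
    _ = 1 - t • N := by
        rw [← NormedSpace.exp_add_of_commute (Commute.refl (S t)).neg_left, neg_add_cancel,
          NormedSpace.exp_zero, one_mul]

end Banach

theorem shiftU_pow_apply (d k : ℕ) (i j : Fin d) :
    (shiftU d ^ k) i j = if (i : ℕ) + k = j then 1 else 0 := by
  induction k generalizing j with
  | zero => simp [Matrix.one_apply, Fin.ext_iff]
  | succ k ih =>
    rw [pow_succ, Matrix.mul_apply]
    rcases lt_or_ge ((i : ℕ) + k) d with h | h
    · rw [Fintype.sum_eq_single ⟨i + k, h⟩ fun b hb => by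
        rw [ih, if_neg fun hc => hb (Fin.ext hc.symm), zero_mul], ih]
      simp [shiftU, Nat.add_assoc]
    · rw [sum_eq_zero fun b _ => by rw [ih, if_neg (by omega), zero_mul], if_neg (by omega)]

theorem shiftU_pow_eq_zero_of_le {d k : ℕ} (h : d ≤ k) : shiftU d ^ k = 0 := by
  ext i j
  rw [shiftU_pow_apply, if_neg (by omega), Matrix.zero_apply]

section LinftyOp

-- `NormedSpace.exp` only sees the topology, which every matrix norm induces.
attribute [local instance] Matrix.linftyOpNormedRing Matrix.linftyOpNormedAlgebra

theorem exp_neg_sum_pow_div_smul_shiftU (d : ℕ) (l : ℂ) :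
    NormedSpace.exp (-∑ k ∈ Icc 1 (d - 1), (l ^ k / k) • shiftU d ^ k) = 1 - l • shiftU d :=
  exp_neg_sum_pow_div_smul_of_pow_eq_zero (shiftU_pow_eq_zero_of_le (by omega)) l

end LinftyOp

theorem amat_miwa_shift (d : ℕ) (A : Matrix (Fin d) (Fin d) ℂ) (x y : ℕ → ℂ) (l : ℂ) :
    amat d A (fun k => x k - l ^ k / k) y = (1 - l • shiftU d) * amat d A x y := by
  have hsplit : ∑ k ∈ Icc 1 (d - 1), (x k - l ^ k / k) • shiftU d ^ k =
      -∑ k ∈ Icc 1 (d - 1), (l ^ k / k) • shiftU d ^ k +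
        ∑ k ∈ Icc 1 (d - 1), x k • shiftU d ^ k := by
    simp only [sub_smul, sum_sub_distrib]
    abel
  rw [amat, amat, hsplit, Matrix.exp_add_of_commute _ _ (commute_sum_smul_pow _ _ _ _ _).neg_left,
    exp_neg_sum_pow_div_smul_shiftU, mul_assoc, mul_assoc, mul_assoc]

/-- With `τ(s,x,y) = det[a_{ij}(x,y)]` over the leading `s × s` block,
the Miwa shift `x ↦ x - ε(λ)`, `ε(λ) = (λ, λ²/2, λ³/3, …)`, gives
`τ(s, x - ε(λ), y) = det[(1 - λΛ)·a(x,y)]` over the same block. -/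
theorem tau_miwa_shift (d s : ℕ) (hs : s ≤ d) (A : Matrix (Fin d) (Fin d) ℂ)
    (x y : ℕ → ℂ) (l : ℂ) :
    Matrix.det (fun i j : Fin s =>
        amat d A (fun k => x k - l ^ k / (k : ℂ)) y (Fin.castLE hs i) (Fin.castLE hs j)) =
    Matrix.det (fun i j : Fin s =>
        ((1 - l • shiftU d) * amat d A x y) (Fin.castLE hs i) (Fin.castLE hs j)) := by
  rw [amat_miwa_shift]
end

section
/- For the phase model L-operator L_j(u) = [[1/u, \phi_j^†],[\phi_j, u]] and R-matrix R(u,v) with entries f(u,v) = u^2/(u^2-v^2) on the diagonal corners, g(u,v) = uv/(u^2-v^2) and 1 in the middle block, the intertwining relation R(u,v)[L_j(u) ⊗ L_j(v)] = [L_j(v) ⊗ L_j(u)]R(u,v) holds, where \phi, \phi^† satisfy [\phi,\phi^†] = \pi (vacuum projector), \phi\phi^† = 1, \phi^†\phi = 1 - \pi. -/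
open Finset

noncomputable section

/-- The single-site Fock space of the phase model. -/
abbrev Fock1 := ℕ →₀ ℂ

/-- The phase annihilation operator `φ`: `φ|n+1⟩ = |n⟩`, `φ|0⟩ = 0`. -/
def phi1 : Module.End ℂ Fock1 :=
  Finsupp.lsum ℂ fun n => if n = 0 then 0 else Finsupp.lsingle (n - 1)

/-- The phase creation operator `φ†`: `φ†|n⟩ = |n+1⟩`. -/
def phiDag1 : Module.End ℂ Fock1 := Finsupp.lmapDomain ℂ ℂ (· + 1)

/-- The vacuum projector `π = |0⟩⟨0|`. -/
def vacProj : Module.End ℂ Fock1 :=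
  Finsupp.lsum ℂ fun n => if n = 0 then Finsupp.lsingle 0 else 0

/-- The local `L`-operator `L(u) = [[1/u, φ†], [φ, u]]`. -/
def L1 (u : ℂ) : Matrix (Fin 2) (Fin 2) (Module.End ℂ Fock1) :=
  !![u⁻¹ • 1, phiDag1; phi1, u • 1]

/-- The `R`-matrix of the phase model, with diagonal corner entries
`f(u,v) = u²/(u²-v²)`, middle block `[[g, 1], [0, g]]` with `g(u,v) = uv/(u²-v²)`. -/
def Rmat (u v : ℂ) : Matrix (Fin 2 × Fin 2) (Fin 2 × Fin 2) ℂ := fun p q =>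
  if p = q then (if p.1 = p.2 then u ^ 2 / (u ^ 2 - v ^ 2) else u * v / (u ^ 2 - v ^ 2))
  else if p = (0, 1) ∧ q = (1, 0) then 1 else 0

end


private lemma phase_h1 : phi1 * phiDag1 = 1 := by
  ext n : 2
  simp [phi1, phiDag1, Module.End.mul_apply, Finsupp.lmapDomain_apply, Finsupp.mapDomain_single]

private lemma phase_h2 : phiDag1 * phi1 = 1 - vacProj := by
  ext n : 2
  rcases n with _ | n <;>
  simp [phi1, phiDag1, vacProj, Module.End.mul_apply, Finsupp.lmapDomain_apply,
    Finsupp.mapDomain_single]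

private lemma L1_00 (u : ℂ) : L1 u 0 0 = u⁻¹ • 1 := rfl
private lemma L1_01 (u : ℂ) : L1 u 0 1 = phiDag1 := rfl
private lemma L1_10 (u : ℂ) : L1 u 1 0 = phi1 := rfl
private lemma L1_11 (u : ℂ) : L1 u 1 1 = u • 1 := rfl

set_option maxHeartbeats 2000000 in

/-- The phase operators satisfy `φφ† = 1`, `φ†φ = 1 - π`,
`[φ, φ†] = π`, and the intertwining relation
`R(u,v) [L(u) ⊗ L(v)] = [L(v) ⊗ L(u)] R(u,v)` holds. -/
theorem phase_model_intertwining (u v : ℂ) (hu : u ≠ 0) (hv : v ≠ 0)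
    (huv : u ^ 2 ≠ v ^ 2) :
    phi1 * phiDag1 = 1 ∧
    phiDag1 * phi1 = 1 - vacProj ∧
    phi1 * phiDag1 - phiDag1 * phi1 = vacProj ∧
    (Rmat u v).map (algebraMap ℂ (Module.End ℂ Fock1)) *
        Matrix.kroneckerMap (· * ·) (L1 u) (L1 v) =
      Matrix.kroneckerMap (· * ·) (L1 v) (L1 u) *
        (Rmat u v).map (algebraMap ℂ (Module.End ℂ Fock1)) := by
  have h1 := phase_h1
  have h2 := phase_h2
  have huv' : u ^ 2 - v ^ 2 ≠ 0 := sub_ne_zero.mpr huv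
  refine ⟨h1, h2, by rw [h1, h2]; abel, ?_⟩
  apply Matrix.ext
  rintro ⟨i, j⟩ ⟨k, l⟩
  fin_cases i <;> fin_cases j <;> fin_cases k <;> fin_cases l <;>
  · simp only [Matrix.mul_apply, Fintype.sum_prod_type, Fin.sum_univ_two, Rmat,
      Matrix.kroneckerMap_apply, Matrix.map_apply, Prod.mk.injEq, Fin.isValue,
      Fin.zero_eta, Fin.mk_one,
      L1_00, L1_01, L1_10, L1_11,
      Fin.zero_eq_one_iff, Fin.one_eq_zero_iff, Nat.succ_ne_self, OfNat.ofNat_ne_one,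
      one_ne_zero, zero_ne_one, and_true, true_and, and_false, false_and,
      and_self, ite_true, ite_false, not_false_iff,
      Algebra.algebraMap_eq_smul_one, smul_mul_assoc, mul_smul_comm, smul_smul,
      one_mul, mul_one, zero_smul, smul_zero, zero_add, add_zero, h1, h2]
    match_scalars <;> field_simp <;> ring
end
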